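/- arXiv:1906.00069 — 3 statements merged into one kernel-verified Lean document; each statement's English description precedes it below -/
import Mathlib

section
/- Let F be a group and Φ : F ≃* F an automorphism, and let G_Φ = F ⋊_Φ ℤ be the mapping torus with stable letter t. For all h, h' ∈ F, the cyclic subgroups ⟨inl(h)·t·inl(h)⁻¹⟩ and ⟨inl(h')·t·inl(h')⁻¹⟩ of G_Φ have nontrivial intersection if and only if there exists a nonzero integer k with Φ^k(h'⁻¹·h) = h'⁻¹·h. -/
open SemidirectProduct

private lemma conj_t_zpow {F : Type*} [Group F] (Φ : F ≃* F) (g : F) (k : ℤ) :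
    (inl g * inr (Multiplicative.ofAdd 1) * (inl g)⁻¹ :
      F ⋊[zpowersHom (MulAut F) Φ] Multiplicative ℤ) ^ k
    = ⟨g * (Φ ^ k) g⁻¹, Multiplicative.ofAdd k⟩ := by
  rw [conj_zpow, ← map_zpow, ← ofAdd_zsmul, smul_eq_mul, mul_one]
  ext
  · simp [mul_left, zpowersHom_apply]
  · simp [mul_right]

/-- In the mapping torus `G_Φ = F ⋊_Φ ℤ` with stable letter `t`, for `h, h' ∈ F` the
cyclic subgroups `⟨inl(h)·t·inl(h)⁻¹⟩` and `⟨inl(h')·t·inl(h')⁻¹⟩` intersect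
nontrivially iff some nonzero power of `Φ` fixes `h'⁻¹·h`. -/
theorem mappingTorus_conjugate_zpowers_inter_ne_bot_iff {F : Type*} [Group F]
    (Φ : F ≃* F)
    (t : F ⋊[zpowersHom (MulAut F) Φ] Multiplicative ℤ)
    (ht : t = inr (Multiplicative.ofAdd 1)) :
    ∀ h h' : F,
      Subgroup.zpowers (inl h * t * (inl h)⁻¹) ⊓
          Subgroup.zpowers (inl h' * t * (inl h')⁻¹) ≠ ⊥ ↔
        ∃ k : ℤ, k ≠ 0 ∧ (Φ ^ k) (h'⁻¹ * h) = h'⁻¹ * h := by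
  intro h h'
  subst ht
  rw [Subgroup.ne_bot_iff_exists_ne_one]
  constructor
  · rintro ⟨⟨x, hx1, hx2⟩, hxne⟩
    obtain ⟨k, hk⟩ := Subgroup.mem_zpowers_iff.mp hx1
    obtain ⟨m, hm⟩ := Subgroup.mem_zpowers_iff.mp hx2
    rw [conj_t_zpow] at hk hm
    subst hk
    have hkm : k = m := by
      have := congrArg SemidirectProduct.right hm
      simpa using this.symm
    subst hkm
    refine ⟨k, ?_, ?_⟩
    · rintro rfl
      apply hxne
      refine Subtype.ext ?_
      ext <;> simp
    · have hleft : h' * (Φ ^ k) h'⁻¹ = h * (Φ ^ k) h⁻¹ :=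
        congrArg SemidirectProduct.left hm
      simp only [map_inv] at hleft
      have key : ((Φ ^ k) h')⁻¹ * (Φ ^ k) h = h'⁻¹ * h := by
        calc ((Φ ^ k) h')⁻¹ * (Φ ^ k) h
            = h'⁻¹ * (h' * ((Φ ^ k) h')⁻¹) * (Φ ^ k) h := by group
          _ = h'⁻¹ * (h * ((Φ ^ k) h)⁻¹) * (Φ ^ k) h := by rw [hleft]
          _ = h'⁻¹ * h := by group
      rw [map_mul, map_inv]
      exact key
  · rintro ⟨k, hk0, hk⟩
    rw [map_mul, map_inv] at hk
    have hfix : h * (Φ ^ k) h⁻¹ = h' * (Φ ^ k) h'⁻¹ := by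
      simp only [map_inv]
      calc h * ((Φ ^ k) h)⁻¹
          = h' * (h'⁻¹ * h) * ((Φ ^ k) h)⁻¹ := by group
        _ = h' * (((Φ ^ k) h')⁻¹ * (Φ ^ k) h) * ((Φ ^ k) h)⁻¹ := by rw [hk]
        _ = h' * ((Φ ^ k) h')⁻¹ := by group
    refine ⟨⟨(inl h * inr (Multiplicative.ofAdd 1) * (inl h)⁻¹) ^ k,
      Subgroup.mem_inf.mpr ⟨Subgroup.mem_zpowers_iff.mpr ⟨k, rfl⟩,
        Subgroup.mem_zpowers_iff.mpr ⟨k, ?_⟩⟩⟩, ?_⟩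
    · rw [conj_t_zpow, conj_t_zpow, hfix]
    · intro hcon
      apply hk0
      have h1 := congrArg (fun z : ↥(Subgroup.zpowers
          (inl h * inr (Multiplicative.ofAdd 1) * (inl h)⁻¹) ⊓ Subgroup.zpowers
          (inl h' * inr (Multiplicative.ofAdd 1) * (inl h')⁻¹)) =>
        SemidirectProduct.right (z : F ⋊[zpowersHom (MulAut F) Φ] Multiplicative ℤ)) hcon
      simp only [conj_t_zpow] at h1
      simpa using h1
end

section
/- Let F be a group and Φ : F ≃* F an automorphism, and let G_Φ = F ⋊_Φ ℤ be the mapping torus with stable letter t. Then the normalizer of the cyclic subgroup ⟨t⟩ in G_Φ, the centralizer of t in G_Φ, and the subgroup { inl(g)·t^k : g ∈ Fix(Φ), k ∈ ℤ } all coincide. -/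
open SemidirectProduct

/-! Projecting to `ℤ` shows that an element conjugating `t` into `⟨t⟩` must send `t` to `t`
itself, so the normalizer of `⟨t⟩` is the centralizer of `t`. Writing `x = inl g · t^k`,
conjugation by `t` fixes `t^k` and sends `inl g` to `inl (Φ g)`, so `x` commutes with `t`
exactly when `Φ g = g`. -/

theorem Subgroup.normalizer_zpowers_eq_centralizer_of_not_isOfFinOrder {G A : Type*} [Group G]
    [CommGroup A] (f : G →* A) {t : G} (ht : ¬IsOfFinOrder (f t)) :
    normalizer (zpowers t : Set G) = centralizer {t} := by
  refine le_antisymm (fun x hx => ?_) ?_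
  · obtain ⟨n, hn : t ^ n = x * t * x⁻¹⟩ : x * t * x⁻¹ ∈ zpowers t :=
      (mem_normalizer_iff.mp hx t).mp (mem_zpowers t)
    have hn1 : n = 1 := injective_zpow_iff_not_isOfFinOrder.mpr ht <| by
      simpa [mul_inv_cancel_comm] using congrArg f hn
    rw [mem_centralizer_singleton_iff, ← mul_inv_eq_iff_eq_mul, ← hn, hn1, zpow_one]
  · rw [← centralizer_closure, ← zpowers_eq_closure]
    exact centralizer_le_normalizer _

namespace SemidirectProduct

variable {F : Type*} [Group F] (Φ : F ≃* F)

theorem zpowersHom_not_isOfFinOrder_rightHom_inr :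
    ¬IsOfFinOrder (rightHom (inr (Multiplicative.ofAdd 1) :
      F ⋊[zpowersHom (MulAut F) Φ] Multiplicative ℤ)) := by
  rw [rightHom_inr]
  exact not_isOfFinOrder_of_isMulTorsionFree (by simp)

theorem zpowersHom_commute_inr_iff (x : F ⋊[zpowersHom (MulAut F) Φ] Multiplicative ℤ) :
    Commute x (inr (Multiplicative.ofAdd 1)) ↔ Φ x.left = x.left := by
  rw [Commute, SemiconjBy, SemidirectProduct.ext_iff]
  simp [mul_comm x.right, eq_comm]

theorem zpowersHom_eq_inl_mul_inr_zpow_iff (x : F ⋊[zpowersHom (MulAut F) Φ] Multiplicative ℤ)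
    (g : F) (k : ℤ) :
    x = inl g * inr (Multiplicative.ofAdd 1) ^ k ↔
      x.left = g ∧ x.right = Multiplicative.ofAdd k := by
  rw [← map_zpow, ← ofAdd_zsmul, smul_eq_mul, mul_one, ← mk_eq_inl_mul_inr,
    SemidirectProduct.ext_iff]

end SemidirectProduct

/-- In the mapping torus `G_Φ = F ⋊_Φ ℤ` with stable letter `t`, the normalizer of
`⟨t⟩`, the centralizer of `t`, and the set `{inl(g)·t^k : g ∈ Fix(Φ), k ∈ ℤ}` all
coincide. -/
theorem mappingTorus_normalizer_eq_centralizer {F : Type*} [Group F] (Φ : F ≃* F)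
    (t : F ⋊[zpowersHom (MulAut F) Φ] Multiplicative ℤ)
    (ht : t = inr (Multiplicative.ofAdd 1)) :
    Subgroup.normalizer (Subgroup.zpowers t : Set _) = Subgroup.centralizer {t} ∧
    (Subgroup.centralizer {t} :
        Set (F ⋊[zpowersHom (MulAut F) Φ] Multiplicative ℤ)) =
      {x | ∃ g : F, ∃ k : ℤ, Φ g = g ∧ x = inl g * t ^ k} := by
  subst ht
  refine ⟨Subgroup.normalizer_zpowers_eq_centralizer_of_not_isOfFinOrder rightHom
    (zpowersHom_not_isOfFinOrder_rightHom_inr Φ), Set.ext fun x => ?_⟩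
  simp only [SetLike.mem_coe, Subgroup.mem_centralizer_singleton_iff, Set.mem_ofPred_eq,
    ← commute_iff_eq, zpowersHom_commute_inr_iff, zpowersHom_eq_inl_mul_inr_zpow_iff]
  exact ⟨fun hx => ⟨x.left, Multiplicative.toAdd x.right, hx, rfl, rfl⟩,
    fun ⟨_, _, hg, hleft, _⟩ => hleft ▸ hg⟩
end

section
/- Let n ≥ 1 and let Φ : FreeGroup (Fin n) ≃* FreeGroup (Fin n) be an automorphism of the free group of rank n. Then the fixed subgroup Fix(Φ) = { x ∈ FreeGroup (Fin n) : Φ(x) = x } is a finitely generated subgroup of FreeGroup (Fin n) (hence, being a subgroup of a free group, a free group of finite rank). -/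
/-!
For a word `w` fixed by `φ`, write `w = p_k s_k` with `|p_k| = k` and put `V_k = φ(p_k)⁻¹ p_k`,
so that `φ(p_k) = p_k V_k⁻¹`, `φ(s_k) = V_k s_k` and `V_0 = V_|w| = 1`. If `V_i = V_j` for some
`i < j` with `i + j ≠ |w|`, then `w = (p_j p_i⁻¹)(p_i s_j)` or `w = (p_i s_j)(s_j⁻¹ s_i)` is a
product of two strictly shorter fixed words. So it is enough to bound the length of fixed words
without such a repetition.

By Cooper's bounded cancellation lemma, proved by a Morse-lemma argument in the Cayley tree, there
is a `C` with `|φ u| + |φ v| ≤ |φ (u v)| + 2 C` whenever `|u v| = |u| + |v|`. Hence, at a `V_k`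
longer than `C`, the next letter of `w` is determined by `V_k` and the previous letter, uniformly
over all fixed words. An excursion of the walk `k ↦ V_k` out of the ball of radius `C` is
therefore determined by its starting point and first letter, so excursions have bounded length;
and without repetitions the walk visits each point of the ball at most twice, at `k` and
`|w| - k`.
-/

open Finset

theorem Nat.exists_mem_Ico_not_and_succ {p : ℕ → Prop} {a b : ℕ} (hab : a ≤ b)
    (ha : ¬ p a) (hb : p b) : ∃ s ∈ Set.Ico a b, ¬ p s ∧ p (s + 1) := by
  obtain ⟨n, hn, hn1⟩ := Nat.exists_not_and_succ_of_not_zero_of_exists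
    (p := fun n => p (min (a + n) b)) (by simpa [hab]) ⟨b - a, by simpa [hab]⟩
  have hnb : a + n < b := by
    by_contra h
    exact hn (by rwa [min_eq_right (by omega)])
  refine ⟨a + n, ⟨by omega, hnb⟩, by rwa [min_eq_left hnb.le] at hn, ?_⟩
  rwa [min_eq_left (by omega), ← add_assoc] at hn1

theorem Nat.sub_le_mul_card_filter {p : ℕ → Prop} [DecidablePred p] {E L : ℕ}
    (h : ∀ a < L, p a → ∃ b, a < b ∧ b ≤ a + E ∧ b ≤ L ∧ p b) {a : ℕ} (ha : a ≤ L)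
    (hpa : p a) : L - a ≤ E * #{k ∈ Ico a L | p k} := by
  induction hd : L - a using Nat.strong_induction_on generalizing a with
  | _ d ih =>
    obtain ha | rfl := ha.lt_or_eq
    · obtain ⟨b, hab, hbE, hbL, hpb⟩ := h a ha hpa
      have hb := ih (L - b) (by omega) hbL hpb rfl
      have hsub : insert a {k ∈ Ico b L | p k} ⊆ {k ∈ Ico a L | p k} := by
        intro k
        simp only [mem_insert, mem_filter, mem_Ico]
        rintro (rfl | ⟨⟨hbk, hkL⟩, hk⟩)
        exacts [⟨⟨le_rfl, ha⟩, hpa⟩, ⟨⟨by omega, hkL⟩, hk⟩]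
      have hcard := card_le_card hsub
      rw [card_insert_of_notMem (by simp; omega)] at hcard
      calc d = (b - a) + (L - b) := by omega
        _ ≤ E * (#{k ∈ Ico b L | p k} + 1) := by rw [mul_add_one]; omega
        _ ≤ E * #{k ∈ Ico a L | p k} := Nat.mul_le_mul_left _ hcard
    · omega

theorem Finset.card_le_two_mul_of_eq_imp_add_eq {β : Type*} {f : ℕ → β} {s : Finset ℕ}
    {t : Finset β} {L : ℕ} (hf : ∀ k ∈ s, f k ∈ t)
    (hrep : ∀ i ∈ s, ∀ j ∈ s, i < j → f i = f j → i + j = L) : #s ≤ 2 * #t := by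
  calc #s ≤ #(t ×ˢ (univ : Finset Bool)) := by
        refine card_le_card_of_injOn (fun k => (f k, decide (2 * k < L)))
          (fun k hk => by simp [hf k hk, lt_or_ge]) fun i hi j hj hij => ?_
        simp only [Prod.mk.injEq, decide_eq_decide] at hij
        by_contra hne
        obtain h | h := Nat.lt_or_gt_of_ne hne
        · have := hrep i hi j hj h hij.1
          omega
        · have := hrep j hj i hi h hij.1.symm
          omega
    _ = 2 * #t := by simp [mul_comm]

namespace FreeGroup

variable {α β : Type*} [DecidableEq α] [DecidableEq β]

section ReducedProduct

variable {x y : FreeGroup α}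

theorem toWord_mul_of_norm_mul (h : (x * y).norm = x.norm + y.norm) :
    (x * y).toWord = x.toWord ++ y.toWord :=
  (toWord_mul_sublist x y).eq_of_length (by simpa [norm] using h)

theorem norm_mul_eq_add_iff_isReduced :
    (x * y).norm = x.norm + y.norm ↔ IsReduced (x.toWord ++ y.toWord) := by
  refine ⟨fun h => toWord_mul_of_norm_mul h ▸ isReduced_toWord, fun h => ?_⟩
  simp only [norm, toWord_mul, h.reduce_eq, List.length_append]

theorem head?_toWord_inv (x : FreeGroup α) :
    x⁻¹.toWord.head? = x.toWord.getLast?.map fun a => (a.1, !a.2) := by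
  simp [toWord_inv, invRev, List.getLast?_map]

theorem norm_mul_eq_add_iff :
    (x * y).norm = x.norm + y.norm ↔ ∀ a ∈ x⁻¹.toWord.head?, y.toWord.head? ≠ some a := by
  have hx : IsReduced x.toWord := isReduced_toWord
  have hy : IsReduced y.toWord := isReduced_toWord
  rw [norm_mul_eq_add_iff_isReduced, IsReduced, List.isChain_append]
  simp only [IsReduced] at hx hy
  simp only [hx, hy, true_and, head?_toWord_inv, Option.mem_def, Option.map_eq_some_iff]
  constructor
  · rintro h _ ⟨a, ha, rfl⟩ hb
    simpa using h a ha _ hb rfl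
  · intro h a ha b hb h1
    by_contra h2
    refine h _ ⟨a, ha, rfl⟩ ?_
    rw [hb, Option.some_inj, Prod.ext_iff, Bool.eq_not_iff]
    exact ⟨h1.symm, Ne.symm h2⟩

theorem norm_mul_of_head?_inv_ne (h : x⁻¹.toWord.head? ≠ y.toWord.head?) :
    (x * y).norm = x.norm + y.norm :=
  norm_mul_eq_add_iff.2 fun _ ha hb => h (ha.trans hb.symm)

theorem norm_inv_mul_of_head?_ne (h : x.toWord.head? ≠ y.toWord.head?) :
    (x⁻¹ * y).norm = x.norm + y.norm := by
  simpa using norm_mul_of_head?_inv_ne (x := x⁻¹) (by simpa using h)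

theorem head?_inv_ne_of_norm_mul (h : (x * y).norm = x.norm + y.norm) (hxy : x * y ≠ 1) :
    x⁻¹.toWord.head? ≠ y.toWord.head? := by
  intro heq
  cases hx : x⁻¹.toWord.head? with
  | none =>
    rw [hx, eq_comm, List.head?_eq_none_iff, toWord_eq_nil_iff] at heq
    rw [List.head?_eq_none_iff, toWord_eq_nil_iff, inv_eq_one] at hx
    exact hxy (by rw [hx, heq, one_mul])
  | some a => exact norm_mul_eq_add_iff.1 h a hx (heq ▸ hx)

end ReducedProduct

section TakeDrop

def take (x : FreeGroup α) (k : ℕ) : FreeGroup α := mk (x.toWord.take k)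

def drop (x : FreeGroup α) (k : ℕ) : FreeGroup α := mk (x.toWord.drop k)

variable (x : FreeGroup α) (k : ℕ)

theorem toWord_take : (x.take k).toWord = x.toWord.take k :=
  toWord_mk.trans (isReduced_toWord.infix (List.take_prefix k _).isInfix).reduce_eq

theorem toWord_drop : (x.drop k).toWord = x.toWord.drop k :=
  toWord_mk.trans (isReduced_toWord.infix (List.drop_suffix k _).isInfix).reduce_eq

theorem norm_take : (x.take k).norm = min k x.norm := by
  simp [norm, toWord_take]

theorem norm_drop : (x.drop k).norm = x.norm - k := by
  simp [norm, toWord_drop]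

theorem take_mul_drop : x.take k * x.drop k = x := by
  rw [take, drop, mul_mk, List.take_append_drop, mk_toWord]

theorem norm_take_mul_drop :
    (x.take k * x.drop k).norm = (x.take k).norm + (x.drop k).norm := by
  rw [take_mul_drop, norm_take, norm_drop]
  omega

@[simp] theorem take_zero : x.take 0 = 1 := rfl

@[simp] theorem take_norm : x.take x.norm = x := by
  rw [take, norm, List.take_length, mk_toWord]

theorem take_add_one : x.take (k + 1) = x.take k * mk x.toWord[k]?.toList := by
  rw [take, take, mul_mk, List.take_add_one]

theorem inv_take_mul_take {s t : ℕ} (hst : s ≤ t) :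
    (x.take s)⁻¹ * x.take t = (x.drop s).take (t - s) := by
  rw [inv_mul_eq_iff_eq_mul, take, take, take, toWord_drop, mul_mk, ← List.take_add,
    Nat.add_sub_cancel' hst]

theorem head?_toWord_drop : (x.drop k).toWord.head? = x.toWord[k]? := by
  rw [toWord_drop, List.head?_drop]

theorem head?_toWord_inv_take {k : ℕ} (hk : 0 < k) (hkx : k ≤ x.norm) :
    (x.take k)⁻¹.toWord.head? = x.toWord[k - 1]?.map fun a => (a.1, !a.2) := by
  rw [head?_toWord_inv, toWord_take, List.getLast?_take, if_neg hk.ne',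
    List.getElem?_eq_getElem (by simp [norm] at hkx; omega), Option.some_or]

theorem head?_toWord_inv_take_ne_drop (hx : x ≠ 1) :
    (x.take k)⁻¹.toWord.head? ≠ (x.drop k).toWord.head? :=
  head?_inv_ne_of_norm_mul (norm_take_mul_drop x k) (by rwa [take_mul_drop])

theorem take_norm_of_norm_mul {y : FreeGroup α} (h : (x * y).norm = x.norm + y.norm) :
    (x * y).take x.norm = x := by
  rw [take, toWord_mul_of_norm_mul h, norm, List.take_left, mk_toWord]

end TakeDrop

theorem exists_branch_point (x y : FreeGroup α) :
    ∃ g x' y', x = g * x' ∧ y = g * y' ∧ (g * x').norm = g.norm + x'.norm ∧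
      (g * y').norm = g.norm + y'.norm ∧ (x'⁻¹ * y').norm = x'.norm + y'.norm := by
  set c := Nat.findGreatest (fun n => x.toWord.take n = y.toWord.take n) x.norm
  have hc₀ : x.toWord.take c = y.toWord.take c :=
    Nat.findGreatest_spec (P := fun n => x.toWord.take n = y.toWord.take n) (Nat.zero_le _)
      (by simp)
  have hc : x.take c = y.take c := congrArg mk hc₀
  refine ⟨x.take c, x.drop c, y.drop c, (take_mul_drop x c).symm, by rw [hc, take_mul_drop],
    norm_take_mul_drop x c, by rw [hc]; exact norm_take_mul_drop y c, ?_⟩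
  by_cases hhead : (x.drop c).toWord.head? = (y.drop c).toWord.head?
  · cases hx : (x.drop c).toWord.head? with
    | none =>
      rw [hx, eq_comm, List.head?_eq_none_iff, toWord_eq_nil_iff] at hhead
      rw [List.head?_eq_none_iff, toWord_eq_nil_iff] at hx
      simp [hx, hhead]
    | some a =>
      -- then the common prefix would extend by `a`
      rw [hx, eq_comm, head?_toWord_drop] at hhead
      rw [head?_toWord_drop] at hx
      have hcx : c + 1 ≤ x.norm := List.getElem?_eq_some_iff.1 hx |>.1
      refine absurd ?_ (Nat.findGreatest_is_greatest (lt_add_one c) hcx)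
      rw [List.take_add_one, List.take_add_one, hx, hhead, hc₀]
  · exact norm_inv_mul_of_head?_ne hhead

theorem norm_le_of_quasiGeodesic {W : ℕ → FreeGroup α} {lam mu T N : ℕ} (hTN : T ≤ N)
    (hlip : ∀ s t, s ≤ t → t ≤ N → ((W s)⁻¹ * W t).norm ≤ lam * (t - s))
    (hco : ∀ s t, s ≤ t → t ≤ N → t - s ≤ mu * ((W s)⁻¹ * W t).norm)
    (h0 : (W 0).toWord.head? ≠ (W T).toWord.head?)
    (hN : (W N).toWord.head? ≠ (W T).toWord.head?) :
    (W T).norm ≤ lam + 2 * lam * lam * mu := by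
  set f : ℕ → Prop := fun t => (W t).toWord.head? = (W T).toWord.head?
  -- a step of the path that changes the first letter passes through the origin
  have hcross : ∀ s < N, (f s ↔ ¬ f (s + 1)) → (W s).norm + (W (s + 1)).norm ≤ lam := by
    intro s hs hf
    have hne : (W s).toWord.head? ≠ (W (s + 1)).toWord.head? := fun h => by simp_all [f]
    simpa [norm_inv_mul_of_head?_ne hne] using hlip s (s + 1) (by omega) (by omega)
  obtain ⟨s, ⟨-, hsT⟩, hs, hs1⟩ :=
    Nat.exists_mem_Ico_not_and_succ (p := f) (Nat.zero_le T) h0 rfl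
  obtain ⟨s', ⟨hTs', hs'N⟩, hs', hs'1⟩ :=
    Nat.exists_mem_Ico_not_and_succ (p := fun t => ¬ f t) hTN (not_not.2 rfl) hN
  have h1 := hcross s (by omega) (by tauto)
  have h2 := hcross s' hs'N (by tauto)
  have hgap : T - (s + 1) ≤ mu * (2 * lam) := calc
    T - (s + 1) ≤ s' - (s + 1) := by omega
    _ ≤ mu * ((W (s + 1))⁻¹ * W s').norm := hco _ _ (by omega) (by omega)
    _ ≤ mu * (2 * lam) := by
      gcongr
      have := norm_mul_le (W (s + 1))⁻¹ (W s')
      rw [norm_inv_eq] at this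
      omega
  calc (W T).norm = (W (s + 1) * ((W (s + 1))⁻¹ * W T)).norm := by rw [mul_inv_cancel_left]
    _ ≤ (W (s + 1)).norm + ((W (s + 1))⁻¹ * W T).norm := norm_mul_le _ _
    _ ≤ lam + lam * (mu * (2 * lam)) :=
      add_le_add (by omega) ((hlip _ _ (by omega) hTN).trans (Nat.mul_le_mul_left _ hgap))
    _ = lam + 2 * lam * lam * mu := by ring

def BoundedCancellation (φ : FreeGroup α →* FreeGroup β) (C : ℕ) : Prop :=
  ∀ u v, (u * v).norm = u.norm + v.norm → (φ u).norm + (φ v).norm ≤ (φ (u * v)).norm + 2 * C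

theorem boundedCancellation_of_lipschitz (φ : FreeGroup α →* FreeGroup β) {lam mu : ℕ}
    (hlip : ∀ x, (φ x).norm ≤ lam * x.norm) (hco : ∀ x, x.norm ≤ mu * (φ x).norm) :
    BoundedCancellation φ (lam + 2 * lam * lam * mu) := by
  intro u v huv
  obtain ⟨g, x, y, hx, hy, hgx, hgy, hxy⟩ := exists_branch_point (φ u)⁻¹ (φ v)
  have hu : (φ u).norm = g.norm + x.norm := by rw [← norm_inv_eq, hx, hgx]
  have hv : (φ v).norm = g.norm + y.norm := by rw [hy, hgy]
  have huv' : (φ (u * v)).norm = x.norm + y.norm := by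
    rw [_root_.map_mul, ← inv_inv (φ u), hx, hy, mul_inv_rev, mul_assoc, inv_mul_cancel_left,
      hxy]
  suffices g.norm ≤ lam + 2 * lam * lam * mu by omega
  obtain rfl | hg := eq_or_ne g 1
  · simp
  have hne : ∀ z, (g * z).norm = g.norm + z.norm → g⁻¹.toWord.head? ≠ z.toWord.head? :=
    fun z hz => head?_inv_ne_of_norm_mul hz fun h => hg (by
      rw [← norm_eq_zero] at h ⊢
      omega)
  -- the image of the geodesic from `1` to `u * v`, seen from the branch point `φ u * g`
  set W : ℕ → FreeGroup β := fun t => (φ u * g)⁻¹ * φ ((u * v).take t)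
  have hseg : ∀ s t, s ≤ t → t ≤ (u * v).norm →
      ∃ z, (W s)⁻¹ * W t = φ z ∧ z.norm = t - s := by
    intro s t hst ht
    refine ⟨((u * v).drop s).take (t - s), ?_, by rw [norm_take, norm_drop]; omega⟩
    simp only [W, ← inv_take_mul_take _ hst, _root_.map_mul, _root_.map_inv]
    group
  have hW0 : W 0 = x := by simp [W, hx]
  have hWT : W u.norm = g⁻¹ := by simp [W, take_norm_of_norm_mul _ huv]
  have hWN : W (u * v).norm = y := by simp [W, hy]
  have := norm_le_of_quasiGeodesic (W := W) (T := u.norm) (N := (u * v).norm) (by omega)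
    (fun s t hst ht => by
      obtain ⟨z, hz, hzn⟩ := hseg s t hst ht
      rw [hz, ← hzn]
      exact hlip z)
    (fun s t hst ht => by
      obtain ⟨z, hz, hzn⟩ := hseg s t hst ht
      rw [hz, ← hzn]
      exact hco z)
    (by rw [hW0, hWT]; exact (hne x hgx).symm) (by rw [hWN, hWT]; exact (hne y hgy).symm)
  rwa [hWT, norm_inv_eq] at this

theorem exists_norm_map_le [Finite α] (φ : FreeGroup α →* FreeGroup β) :
    ∃ lam, ∀ x, (φ x).norm ≤ lam * x.norm := by
  obtain ⟨lam, hlam⟩ := Finite.exists_le fun a : α × Bool => (φ (mk [a])).norm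
  suffices ∀ L, (φ (mk L)).norm ≤ lam * L.length from
    ⟨lam, fun x => by have := this x.toWord; rwa [mk_toWord] at this⟩
  intro L
  induction L with
  | nil => simp [← one_eq_mk]
  | cons a L ih =>
    calc (φ (mk (a :: L))).norm = (φ (mk [a]) * φ (mk L)).norm := by
          rw [← _root_.map_mul, mul_mk]; rfl
      _ ≤ (φ (mk [a])).norm + (φ (mk L)).norm := norm_mul_le _ _
      _ ≤ lam * (a :: L).length := by simp only [List.length_cons]; nlinarith [hlam a]

theorem exists_boundedCancellation [Finite α] [Finite β] (φ : FreeGroup α ≃* FreeGroup β) :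
    ∃ C, BoundedCancellation φ.toMonoidHom C := by
  obtain ⟨lam, hlam⟩ := exists_norm_map_le φ.toMonoidHom
  obtain ⟨mu, hmu⟩ := exists_norm_map_le φ.symm.toMonoidHom
  exact ⟨_, boundedCancellation_of_lipschitz _ hlam fun x => by simpa using hmu (φ x)⟩

theorem finite_setOf_norm_le [Finite α] (m : ℕ) : {x : FreeGroup α | x.norm ≤ m}.Finite :=
  (List.finite_length_le _ m).preimage toWord_injective.injOn

section FixedWords

variable (φ : FreeGroup α →* FreeGroup α)

def prefixDefect (w : FreeGroup α) (k : ℕ) : FreeGroup α := (φ (w.take k))⁻¹ * w.take k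

variable {φ} {C : ℕ} {w w' : FreeGroup α}

@[simp] theorem prefixDefect_zero : prefixDefect φ w 0 = 1 := by simp [prefixDefect]

theorem prefixDefect_norm (hw : φ w = w) : prefixDefect φ w w.norm = 1 := by
  simp [prefixDefect, hw]

theorem prefixDefect_add_one (k : ℕ) :
    prefixDefect φ w (k + 1) =
      (φ (mk w.toWord[k]?.toList))⁻¹ * prefixDefect φ w k * mk w.toWord[k]?.toList := by
  simp only [prefixDefect, take_add_one, _root_.map_mul]
  group

theorem prefixDefect_add_one_congr {k k' : ℕ} (hV : prefixDefect φ w k = prefixDefect φ w' k')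
    (hl : w.toWord[k]? = w'.toWord[k']?) :
    prefixDefect φ w (k + 1) = prefixDefect φ w' (k' + 1) := by
  rw [prefixDefect_add_one, prefixDefect_add_one, hV, hl]

theorem map_take (k : ℕ) : φ (w.take k) = w.take k * (prefixDefect φ w k)⁻¹ := by
  simp [prefixDefect]

theorem map_drop (hw : φ w = w) (k : ℕ) : φ (w.drop k) = prefixDefect φ w k * w.drop k := by
  rw [prefixDefect, mul_assoc, take_mul_drop, eq_inv_mul_iff_mul_eq, ← _root_.map_mul,
    take_mul_drop, hw]

-- `x v⁻¹`, `v y` and `x y` are reduced, yet in `φ (x y) = x y` the two copies of `v` cancel.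
theorem BoundedCancellation.norm_le_of_head?_ne (hC : BoundedCancellation φ C)
    {x y v : FreeGroup α} (hx : φ x = x * v⁻¹) (hy : φ y = v * y)
    (hxv : x⁻¹.toWord.head? ≠ v⁻¹.toWord.head?) (hvy : v⁻¹.toWord.head? ≠ y.toWord.head?)
    (hxy : x⁻¹.toWord.head? ≠ y.toWord.head?) : v.norm ≤ C := by
  have := hC x y (norm_mul_of_head?_inv_ne hxy)
  rw [_root_.map_mul, hx, hy, mul_assoc, inv_mul_cancel_left, norm_mul_of_head?_inv_ne hxv,
    norm_mul_of_head?_inv_ne hvy, norm_mul_of_head?_inv_ne hxy, norm_inv_eq] at this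
  omega

theorem BoundedCancellation.head?_eq (hC : BoundedCancellation φ C) {p s p' s' : FreeGroup α}
    (hw : φ (p * s) = p * s) (hw' : φ (p' * s') = p' * s')
    (hV : (φ p)⁻¹ * p = (φ p')⁻¹ * p') (hlarge : C < ((φ p)⁻¹ * p).norm)
    (hps : p⁻¹.toWord.head? ≠ s.toWord.head?) (hps' : p'⁻¹.toWord.head? ≠ s'.toWord.head?)
    (hpp' : p⁻¹.toWord.head? = p'⁻¹.toWord.head?) : s.toWord.head? = s'.toWord.head? := by
  set v := (φ p)⁻¹ * p
  have hp : φ p = p * v⁻¹ := by simp [v]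
  have hp' : φ p' = p' * v⁻¹ := by simp [v, hV]
  have hs : φ s = v * s := by rw [mul_assoc, ← hw, _root_.map_mul, inv_mul_cancel_left]
  have hs' : φ s' = v * s' := by
    rw [hV, mul_assoc, ← hw', _root_.map_mul, inv_mul_cancel_left]
  by_contra hne
  refine hlarge.not_ge ?_
  -- in each case `x⁻¹`, `v⁻¹` and `y` start with three different letters
  by_cases h1 : v⁻¹.toWord.head? = s.toWord.head?
  · exact hC.norm_le_of_head?_ne hp hs' (by rwa [h1]) (by rwa [h1]) (by rwa [hpp'])
  by_cases h2 : v⁻¹.toWord.head? = s'.toWord.head?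
  · exact hC.norm_le_of_head?_ne hp' hs (by rwa [h2]) (by rwa [h2, ne_comm])
      (by rwa [← hpp'])
  exact hC.norm_le_of_head?_ne (x := s⁻¹) (by simp [hs]) hs' (by simpa using Ne.symm h1) h2
    (by simpa using hne)

theorem BoundedCancellation.getElem?_toWord_eq (hC : BoundedCancellation φ C) (hw : φ w = w)
    (hw' : φ w' = w') {k k' : ℕ} (hk : 0 < k) (hkw : k ≤ w.norm) (hk' : 0 < k')
    (hkw' : k' ≤ w'.norm) (hV : prefixDefect φ w k = prefixDefect φ w' k')
    (hlarge : C < (prefixDefect φ w k).norm) (hin : w.toWord[k - 1]? = w'.toWord[k' - 1]?) :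
    w.toWord[k]? = w'.toWord[k']? := by
  have hne : ∀ x : FreeGroup α, 0 < x.norm → x ≠ 1 := fun x hx h => by simp [h] at hx
  rw [← head?_toWord_drop, ← head?_toWord_drop]
  refine hC.head?_eq (by rwa [take_mul_drop]) (by rwa [take_mul_drop]) hV hlarge
    (head?_toWord_inv_take_ne_drop w k (hne w (by omega)))
    (head?_toWord_inv_take_ne_drop w' k' (hne w' (by omega))) ?_
  rw [head?_toWord_inv_take w hk hkw, head?_toWord_inv_take w' hk' hkw', hin]

variable (φ) in
structure IsExcursion (C : ℕ) (w : FreeGroup α) (a r : ℕ) : Prop where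
  fixed : φ w = w
  pos : 0 < r
  le_norm : a + r ≤ w.norm
  small_start : (prefixDefect φ w a).norm ≤ C
  large : ∀ t, 0 < t → t < r → C < (prefixDefect φ w (a + t)).norm
  small_finish : (prefixDefect φ w (a + r)).norm ≤ C

namespace IsExcursion

variable {a a' r r' : ℕ}

theorem state_eq (hC : BoundedCancellation φ C) (e : IsExcursion φ C w a r)
    (e' : IsExcursion φ C w' a' r') (hV : prefixDefect φ w a = prefixDefect φ w' a')
    (hl : w.toWord[a]? = w'.toWord[a']?) :
    ∀ t, t < r → t < r' → prefixDefect φ w (a + t) = prefixDefect φ w' (a' + t) ∧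
      w.toWord[a + t]? = w'.toWord[a' + t]?
  | 0, _, _ => ⟨hV, hl⟩
  | t + 1, ht, ht' => by
    obtain ⟨hVt, hlt⟩ := e.state_eq hC e' hV hl t (by omega) (by omega)
    have hV' := prefixDefect_add_one_congr hVt hlt
    have := e.le_norm
    have := e'.le_norm
    exact ⟨hV', hC.getElem?_toWord_eq e.fixed e'.fixed (by omega) (by omega) (by omega)
      (by omega) hV' (e.large _ (by omega) ht) hlt⟩

theorem le_of_state (hC : BoundedCancellation φ C) (e : IsExcursion φ C w a r)
    (e' : IsExcursion φ C w' a' r') (hV : prefixDefect φ w a = prefixDefect φ w' a')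
    (hl : w.toWord[a]? = w'.toWord[a']?) : r ≤ r' := by
  by_contra! h
  obtain ⟨t, rfl⟩ : ∃ t, r' = t + 1 := ⟨r' - 1, by have := e'.pos; omega⟩
  obtain ⟨hVt, hlt⟩ := e.state_eq hC e' hV hl t (by omega) (by omega)
  exact (e.large (t + 1) e'.pos h).not_ge
    (prefixDefect_add_one_congr hVt hlt ▸ e'.small_finish)

theorem eq_of_state (hC : BoundedCancellation φ C) (e : IsExcursion φ C w a r)
    (e' : IsExcursion φ C w' a' r') (hV : prefixDefect φ w a = prefixDefect φ w' a')
    (hl : w.toWord[a]? = w'.toWord[a']?) : r = r' :=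
  (e.le_of_state hC e' hV hl).antisymm (e'.le_of_state hC e hV.symm hl.symm)

end IsExcursion

theorem exists_isExcursion (hw : φ w = w) {a : ℕ} (ha : a < w.norm)
    (hsmall : (prefixDefect φ w a).norm ≤ C) : ∃ r, IsExcursion φ C w a r := by
  have hex : ∃ r, 0 < r ∧ (prefixDefect φ w (a + r)).norm ≤ C :=
    ⟨w.norm - a, by omega, by simp [Nat.add_sub_cancel' ha.le, prefixDefect_norm hw]⟩
  obtain ⟨hpos, hstop⟩ := Nat.find_spec hex
  refine ⟨Nat.find hex, hw, hpos, ?_, hsmall, fun t ht htr => ?_, hstop⟩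
  · have := Nat.find_min' hex (m := w.norm - a)
      ⟨by omega, by simp [Nat.add_sub_cancel' ha.le, prefixDefect_norm hw]⟩
    omega
  · exact not_le.1 fun h => Nat.find_min hex htr ⟨ht, h⟩

theorem BoundedCancellation.exists_isExcursion_le [Finite α] (hC : BoundedCancellation φ C) :
    ∃ E, ∀ w a r, IsExcursion φ C w a r → r ≤ E := by
  let state (w : FreeGroup α) (a : ℕ) := (prefixDefect φ w a, w.toWord[a]?)
  have hfin : {r | ∃ w a, IsExcursion φ C w a r}.Finite := by
    refine (((finite_setOf_norm_le C).prod Set.finite_univ).biUnion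
      (t := fun s => {r | ∃ w a, IsExcursion φ C w a r ∧ state w a = s})
      fun s _ => Set.Subsingleton.finite ?_).subset ?_
    · rintro r ⟨w, a, e, rfl⟩ r' ⟨w', a', e', hs⟩
      exact e.eq_of_state hC e' (congrArg Prod.fst hs).symm (congrArg Prod.snd hs).symm
    · rintro r ⟨w, a, e⟩
      exact Set.mem_biUnion (x := state w a) ⟨e.small_start, trivial⟩ ⟨w, a, e, rfl⟩
  obtain ⟨E, hE⟩ := hfin.bddAbove
  exact ⟨E, fun w a r e => hE ⟨w, a, e⟩⟩

theorem exists_mul_eq_of_prefixDefect_eq (hw : φ w = w) {i j : ℕ} (hij : i < j)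
    (hj : j ≤ w.norm) (hV : prefixDefect φ w i = prefixDefect φ w j) (hL : i + j ≠ w.norm) :
    ∃ x y, φ x = x ∧ φ y = y ∧ x * y = w ∧ x.norm < w.norm ∧ y.norm < w.norm := by
  have := norm_take w i
  have := norm_take w j
  have := norm_drop w i
  have := norm_drop w j
  obtain h | h := hL.lt_or_gt
  · refine ⟨w.take j * (w.take i)⁻¹, w.take i * w.drop j, ?_, ?_, ?_, ?_, ?_⟩
    · rw [_root_.map_mul, _root_.map_inv, map_take, map_take, hV]
      group
    · rw [_root_.map_mul, map_take, map_drop hw, hV]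
      group
    · rw [mul_assoc, inv_mul_cancel_left, take_mul_drop]
    · have := norm_mul_le (w.take j) (w.take i)⁻¹
      rw [norm_inv_eq] at this
      omega
    · have := norm_mul_le (w.take i) (w.drop j)
      omega
  · refine ⟨w.take i * w.drop j, (w.drop j)⁻¹ * w.drop i, ?_, ?_, ?_, ?_, ?_⟩
    · rw [_root_.map_mul, map_take, map_drop hw, hV]
      group
    · rw [_root_.map_mul, _root_.map_inv, map_drop hw, map_drop hw, hV]
      group
    · rw [mul_assoc, mul_inv_cancel_left, take_mul_drop]
    · have := norm_mul_le (w.take i) (w.drop j)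
      omega
    · have := norm_mul_le (w.drop j)⁻¹ (w.drop i)
      rw [norm_inv_eq] at this
      omega

theorem BoundedCancellation.exists_norm_le [Finite α] (hC : BoundedCancellation φ C) :
    ∃ N, ∀ w, φ w = w → (∀ i j, i < j → j ≤ w.norm →
      prefixDefect φ w i = prefixDefect φ w j → i + j = w.norm) → w.norm ≤ N := by
  obtain ⟨E, hE⟩ := hC.exists_isExcursion_le
  set B := (finite_setOf_norm_le (α := α) C).toFinset
  refine ⟨E * (2 * #B), fun w hw hrep => ?_⟩
  have hlen : w.norm ≤ E * #{k ∈ Ico 0 w.norm | (prefixDefect φ w k).norm ≤ C} := by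
    refine Nat.sub_zero w.norm ▸ Nat.sub_le_mul_card_filter (fun a ha hsmall => ?_)
      (Nat.zero_le _) (by simp)
    obtain ⟨r, e⟩ := exists_isExcursion hw ha hsmall
    have := e.pos
    have := hE w a r e
    exact ⟨a + r, by omega, by omega, e.le_norm, e.small_finish⟩
  refine hlen.trans (Nat.mul_le_mul_left E (card_le_two_mul_of_eq_imp_add_eq
    (fun k hk => ?_) fun i _ j hj hij => hrep i j hij ?_))
  · simp only [mem_filter] at hk
    simpa [B] using hk.2
  · simp only [mem_filter, mem_Ico] at hj
    omega

end FixedWords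

theorem fg_of_forall_exists_mul_eq [Finite α] (H : Subgroup (FreeGroup α)) (N : ℕ)
    (h : ∀ w ∈ H, N < w.norm →
      ∃ x ∈ H, ∃ y ∈ H, x * y = w ∧ x.norm < w.norm ∧ y.norm < w.norm) : H.FG := by
  refine (Subgroup.fg_iff H).2 ⟨{x | x ∈ H ∧ x.norm ≤ N}, le_antisymm
    (Subgroup.closure_le _ |>.2 fun x hx => hx.1) fun w hw => ?_,
    (finite_setOf_norm_le N).subset fun x hx => hx.2⟩
  induction hn : w.norm using Nat.strong_induction_on generalizing w with
  | _ n ih =>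
    by_cases hN : w.norm ≤ N
    · exact Subgroup.subset_closure ⟨hw, hN⟩
    obtain ⟨x, hx, y, hy, rfl, hxn, hyn⟩ := h w hw (by omega)
    exact mul_mem (ih _ (hn ▸ hxn) x hx rfl) (ih _ (hn ▸ hyn) y hy rfl)

end FreeGroup

theorem fixedSubgroup_fg_general (n : ℕ)
    (Φ : FreeGroup (Fin n) ≃* FreeGroup (Fin n)) :
    (Φ.toMonoidHom.eqLocus (MonoidHom.id (FreeGroup (Fin n)))).FG := by
  obtain ⟨C, hC⟩ := FreeGroup.exists_boundedCancellation Φ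
  obtain ⟨N, hN⟩ := hC.exists_norm_le
  refine FreeGroup.fg_of_forall_exists_mul_eq _ N fun w (hw : Φ w = w) hlong => ?_
  obtain ⟨i, j, hij, hj, hV, hL⟩ : ∃ i j, i < j ∧ j ≤ w.norm ∧
      FreeGroup.prefixDefect _ w i = FreeGroup.prefixDefect _ w j ∧ i + j ≠ w.norm := by
    by_contra! h
    exact hlong.not_ge (hN w hw h)
  obtain ⟨x, y, hx, hy, hxy, hxw, hyw⟩ :=
    FreeGroup.exists_mul_eq_of_prefixDefect_eq hw hij hj hV hL
  exact ⟨x, hx, y, hy, hxy, hxw, hyw⟩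

/-- Gersten's theorem: the fixed subgroup `Fix(Φ) = {x : Φ(x) = x}` of an
automorphism `Φ` of a finitely generated free group is finitely generated (hence,
being a subgroup of a free group, free of finite rank). -/
theorem fixedSubgroup_fg (n : ℕ) (hn : 1 ≤ n)
    (Φ : FreeGroup (Fin n) ≃* FreeGroup (Fin n)) :
    (Φ.toMonoidHom.eqLocus (MonoidHom.id (FreeGroup (Fin n)))).FG :=
  fixedSubgroup_fg_general n Φ
end
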